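/- (Corollary: the clustered limiting stdf dominates the distortion stdf.) Let {1,…,K} be the union of disjoint sets D_1 and D_2. Let W = (W_1,…,W_K) be an integrable, almost surely positive random vector with E[W_k] = 1 for every k. For each k ∈ D_1, let ρ_k ∈ (0,1) and let S_k be a positive random variable with E[S_k^{−ρ_k}] = b_k < ∞, and assume (S_k)_{k∈D_1} is independent of W. Then for every x' = (x'_1,…,x'_K) with all x'_k ≥ 0, E[max_{1≤k≤K} x'_k W_k] ≤ E[max_{k∈D_1} x'_k W_k / (b_k S_k^{ρ_k})] + Σ_{k∈D_2} x'_k. (Equivalently, with ℓ_{1/R}(x') = E[max_k x'_k W_k], one has ℓ_{1/R}(x') ≤ ℓ_{G,ψ,ℓ,Q}(x) whenever x ∈ [0,∞)^d has the coordinates x'_k placed at one position of each cluster k and zeros elsewhere.) -/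

import Mathlib

/-!
Split the maximum over `D1 ∪ D2` into the maximum over `D1` plus the sum of the `D2` terms; the
latter has expectation `∑_{k ∈ D2} x k` because `E[W k] = 1`. On `D1`, the weights
`V k = S k ^ (-ρ k) / b k` have mean one and are independent of `W`, so conditionally on `W`
the expectation of `max_k x k W k V k` dominates `max_k x k W k E[V k] = max_k x k W k`.
-/

open MeasureTheory ProbabilityTheory

lemma integral_pos_of_ae_pos {Ω : Type*} [MeasurableSpace Ω] {μ : Measure Ω} [NeZero μ]
    {f : Ω → ℝ} (hf : ∀ᵐ ω ∂μ, 0 < f ω) (hfi : Integrable f μ) : 0 < ∫ ω, f ω ∂μ := by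
  rw [integral_pos_iff_support_of_nonneg_ae (hf.mono fun _ h => h.le) hfi]
  refine pos_iff_ne_zero.mpr fun h0 => ?_
  obtain ⟨ω, hω, hfω⟩ := ((measure_eq_zero_iff_ae_notMem.mp h0).and hf).exists
  exact hω hfω.ne'

lemma Real.biSup_finset_eq_iSup_subtype {ι : Type*} {s : Finset ι} {a : ι → ℝ}
    (ha : ∀ i ∈ s, 0 ≤ a i) :
    ⨆ i ∈ s, a i = ⨆ i : s, a i := by
  refine cbiSup_eq_ciSup_subtype (Finite.bddAbove_range _) ?_
  rw [Real.sSup_empty]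
  exact Real.iSup_nonneg fun i => ha i i.2

section FiniteSup

variable {ι Ω : Type*} [Fintype ι] [MeasurableSpace Ω] {μ : Measure Ω}

lemma integrable_iSup {f : ι → Ω → ℝ} (hf : ∀ i, Integrable (f i) μ) :
    Integrable (fun ω => ⨆ i, f i ω) μ := by
  refine (integrable_finsetSum Finset.univ fun i _ => (hf i).norm).mono'
    (AEMeasurable.iSup fun i => (hf i).aemeasurable).aestronglyMeasurable
    (ae_of_all _ fun ω => ?_)
  have hle : ∀ i, ‖f i ω‖ ≤ ∑ j, ‖f j ω‖ := fun i =>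
    Finset.single_le_sum (f := fun j => ‖f j ω‖) (fun j _ => norm_nonneg _) (Finset.mem_univ i)
  rw [Real.norm_eq_abs, abs_le]
  rcases isEmpty_or_nonempty ι with hι | ⟨⟨i⟩⟩
  · simp [Real.iSup_of_isEmpty]
  constructor
  · calc -∑ j, ‖f j ω‖ ≤ -|f i ω| := neg_le_neg (hle i)
      _ ≤ f i ω := neg_abs_le _
      _ ≤ ⨆ j, f j ω := le_ciSup (f := fun j => f j ω) (Finite.bddAbove_range _) i
  · exact Real.iSup_le (fun j => (le_abs_self _).trans (hle j))
      (Finset.sum_nonneg fun j _ => norm_nonneg _)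

lemma iSup_le_iSup_subtype_add_sum [DecidableEq ι] {a : ι → ℝ} (ha : ∀ i, 0 ≤ a i)
    {s t : Finset ι} (hst : s ∪ t = Finset.univ) :
    ⨆ i, a i ≤ (⨆ i : s, a i) + ∑ i ∈ t, a i := by
  have hsup : 0 ≤ ⨆ i : s, a i := Real.iSup_nonneg fun i => ha i
  have hsum : 0 ≤ ∑ i ∈ t, a i := Finset.sum_nonneg fun i _ => ha i
  refine Real.iSup_le (fun i => ?_) (add_nonneg hsup hsum)
  rcases Finset.mem_union.mp (hst ▸ Finset.mem_univ i) with hi | hi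
  · exact le_add_of_le_of_nonneg
      (le_ciSup (f := fun j : s => a j) (Finite.bddAbove_range _) ⟨i, hi⟩) hsum
  · exact le_add_of_nonneg_of_le hsup (Finset.single_le_sum (fun j _ => ha j) hi)

lemma integral_iSup_le_integral_iSup_subtype_add_sum [DecidableEq ι] {Y : ι → Ω → ℝ}
    (hY : ∀ i, Integrable (Y i) μ) (hY0 : ∀ i, 0 ≤ᵐ[μ] Y i) {s t : Finset ι}
    (hst : s ∪ t = Finset.univ) :
    ∫ ω, ⨆ i, Y i ω ∂μ ≤ ∫ ω, (⨆ i : s, Y i ω) ∂μ + ∑ i ∈ t, ∫ ω, Y i ω ∂μ := by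
  have hsum := integrable_finsetSum t fun i _ => hY i
  have hsup := integrable_iSup fun i : s => hY i
  rw [← integral_finsetSum t fun i _ => hY i, ← integral_add hsup hsum]
  refine integral_mono_ae (integrable_iSup hY) (hsup.add hsum) ?_
  filter_upwards [ae_all_iff.mpr hY0] with ω hω
  simpa using iSup_le_iSup_subtype_add_sum hω hst

end FiniteSup

section CondExp

variable {ι Ω : Type*} {m mΩ : MeasurableSpace Ω} {μ : Measure Ω} [IsFiniteMeasure μ]

lemma condExp_mul_of_indep (hm : m ≤ mΩ) {Y V : Ω → ℝ} (hY : StronglyMeasurable[m] Y)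
    (hV : Measurable V) (hVindep : Indep (MeasurableSpace.comap V inferInstance) m μ)
    (hVint : Integrable V μ) (hYV : Integrable (Y * V) μ) :
    μ[Y * V | m] =ᵐ[μ] fun ω => Y ω * ∫ ω, V ω ∂μ := by
  filter_upwards [condExp_mul_of_stronglyMeasurable_left hY hYV hVint,
    condExp_indep_eq hV.comap_le hm (comap_measurable V).stronglyMeasurable hVindep]
    with ω hpull hconst
  rw [hpull, Pi.mul_apply, hconst]

theorem integral_iSup_le_integral_iSup_mul_of_indep [Fintype ι] (hm : m ≤ mΩ)
    {Y V : ι → Ω → ℝ} (hY : ∀ i, StronglyMeasurable[m] (Y i)) (hYint : ∀ i, Integrable (Y i) μ)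
    (hV : ∀ i, Measurable (V i))
    (hVindep : ∀ i, Indep (MeasurableSpace.comap (V i) inferInstance) m μ)
    (hVint : ∀ i, Integrable (V i) μ) (hVmean : ∀ i, ∫ ω, V i ω ∂μ = 1)
    (hYV : ∀ i, Integrable (Y i * V i) μ) :
    ∫ ω, ⨆ i, Y i ω ∂μ ≤ ∫ ω, ⨆ i, Y i ω * V i ω ∂μ := by
  rcases isEmpty_or_nonempty ι with hι | hι
  · simp [Real.iSup_of_isEmpty]
  set Z : Ω → ℝ := fun ω => ⨆ i, Y i ω * V i ω
  have hZ : Integrable Z μ := integrable_iSup hYV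
  have hle : ∀ᵐ ω ∂μ, ⨆ i, Y i ω ≤ μ[Z | m] ω := by
    filter_upwards [ae_all_iff.mpr fun i => condExp_mul_of_indep hm (hY i) (hV i) (hVindep i)
        (hVint i) (hYV i),
      ae_all_iff.mpr fun i => condExp_mono (m := m) (hYV i) hZ (ae_of_all _ fun ω =>
        le_ciSup (f := fun j => Y j ω * V j ω) (Finite.bddAbove_range _) i)]
      with ω hpull hmono
    exact ciSup_le fun i => by simpa [hpull i, hVmean i] using hmono i
  calc ∫ ω, ⨆ i, Y i ω ∂μ ≤ ∫ ω, μ[Z | m] ω ∂μ :=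
        integral_mono_ae (integrable_iSup hYint) integrable_condExp hle
    _ = ∫ ω, Z ω ∂μ := integral_condExp hm

end CondExp

theorem stmt_13_general
    {Ω : Type*} [MeasurableSpace Ω] (μ : Measure Ω) [IsProbabilityMeasure μ]
    (K : ℕ)
    (D1 D2 : Finset (Fin K))
    (hcover : D1 ∪ D2 = Finset.univ)
    (W : Fin K → Ω → ℝ)
    (hWmeas : ∀ k, Measurable (W k))
    (hWint : ∀ k, Integrable (W k) μ)
    (hWpos : ∀ k, ∀ᵐ ω ∂μ, 0 < W k ω)
    (hWmean : ∀ k, ∫ ω, W k ω ∂μ = 1)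
    (ρ : Fin K → ℝ)
    (S : Fin K → Ω → ℝ)
    (hSmeas : ∀ k ∈ D1, Measurable (S k))
    (hSpos : ∀ k ∈ D1, ∀ᵐ ω ∂μ, 0 < S k ω)
    (hSint : ∀ k ∈ D1, Integrable (fun ω => S k ω ^ (-(ρ k))) μ)
    (b : Fin K → ℝ) (hb : ∀ k ∈ D1, b k = ∫ ω, S k ω ^ (-(ρ k)) ∂μ)
    (hindep : IndepFun (fun ω => fun k : {k : Fin K // k ∈ D1} => S k.1 ω)
      (fun ω k => W k ω) μ) :
    ∀ x : Fin K → ℝ, (∀ k, 0 ≤ x k) →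
      ∫ ω, (⨆ k, x k * W k ω) ∂μ ≤
        (∫ ω, (⨆ k ∈ D1, x k * W k ω / (b k * S k ω ^ ρ k)) ∂μ) +
          ∑ k ∈ D2, x k := by
  intro x hx
  set U : Ω → Fin K → ℝ := fun ω k => W k ω
  set V : D1 → Ω → ℝ := fun k ω => S k ω ^ (-ρ k) / b k
  have hbpos : ∀ k : D1, 0 < b k := fun k => (hb k k.2).symm ▸
    integral_pos_of_ae_pos ((hSpos k k.2).mono fun _ h => Real.rpow_pos_of_pos h _) (hSint k k.2)
  have hVmean : ∀ k : D1, ∫ ω, V k ω ∂μ = 1 := fun k => by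
    rw [integral_div, ← hb k k.2, div_self (hbpos k).ne']
  have hVindep : ∀ k : D1, IndepFun (V k) U μ := fun k =>
    hindep.comp (φ := fun s : D1 → ℝ => s k ^ (-ρ k) / b k) (by fun_prop) measurable_id
  have hYV : ∀ k : D1, Integrable ((fun ω => x k * W k ω) * V k) μ := fun k =>
    ((hVindep k).comp measurable_id (by fun_prop : Measurable fun w : Fin K → ℝ => x k * w k)).symm
      |>.integrable_mul ((hWint k).const_mul _) ((hSint k k.2).div_const _)
  have hsplit := integral_iSup_le_integral_iSup_subtype_add_sum
    (fun k => (hWint k).const_mul (x k))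
    (fun k => (hWpos k).mono fun _ h => mul_nonneg (hx k) h.le) hcover
  have hcond := integral_iSup_le_integral_iSup_mul_of_indep
    (measurable_pi_lambda _ hWmeas).comap_le
    (Y := fun (k : D1) ω => x k * W k ω)
    (fun k => ((measurable_pi_apply k.1).comp (comap_measurable U)).const_mul _
      |>.stronglyMeasurable)
    (fun k => (hWint k).const_mul _) (fun k => ((hSmeas k k.2).pow_const _).div_const _)
    (fun k => (IndepFun_iff_Indep _ _ _).mp (hVindep k)) (fun k => (hSint k k.2).div_const _)
    hVmean hYV
  have hrewrite : ∫ ω, (⨆ k : D1, x k * W k ω * V k ω) ∂μ =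
      ∫ ω, (⨆ k ∈ D1, x k * W k ω / (b k * S k ω ^ ρ k)) ∂μ := by
    refine integral_congr_ae ?_
    filter_upwards [ae_all_iff.mpr hWpos, ae_all_iff.mpr fun k : D1 => hSpos k k.2] with ω hW hS
    rw [Real.biSup_finset_eq_iSup_subtype fun k hk => div_nonneg (mul_nonneg (hx k) (hW k).le)
      (mul_nonneg (hbpos ⟨k, hk⟩).le (Real.rpow_nonneg (hS ⟨k, hk⟩).le _))]
    exact iSup_congr fun k => by simp only [V]; rw [Real.rpow_neg (hS k).le]; ring
  have hsum : ∑ k ∈ D2, ∫ ω, x k * W k ω ∂μ = ∑ k ∈ D2, x k := by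
    simp [integral_const_mul, hWmean]
  linarith

/-- (Corollary: the clustered limiting stdf dominates the distortion
stdf.)  For a unit-mean, a.s. positive, integrable random vector `W`, exponents
`ρ k ∈ (0,1)` and positive `S k` with `b k = E[S k ^ (-ρ k)] < ∞` for `k ∈ D1`, with
`(S k)_{k ∈ D1}` independent of `W`:
`E[max_k x k * W k] ≤ E[max_{k ∈ D1} x k * W k / (b k * S k ^ ρ k)] + ∑_{k ∈ D2} x k`. -/
theorem stmt_13
    {Ω : Type*} [MeasurableSpace Ω] (μ : Measure Ω) [IsProbabilityMeasure μ]
    (K : ℕ)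
    (D1 D2 : Finset (Fin K)) (hdisj : Disjoint D1 D2)
    (hcover : D1 ∪ D2 = Finset.univ)
    (W : Fin K → Ω → ℝ)
    (hWmeas : ∀ k, Measurable (W k))
    (hWint : ∀ k, Integrable (W k) μ)
    (hWpos : ∀ k, ∀ᵐ ω ∂μ, 0 < W k ω)
    (hWmean : ∀ k, ∫ ω, W k ω ∂μ = 1)
    (ρ : Fin K → ℝ) (hρ : ∀ k ∈ D1, ρ k ∈ Set.Ioo (0 : ℝ) 1)
    (S : Fin K → Ω → ℝ)
    (hSmeas : ∀ k ∈ D1, Measurable (S k))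
    (hSpos : ∀ k ∈ D1, ∀ᵐ ω ∂μ, 0 < S k ω)
    (hSint : ∀ k ∈ D1, Integrable (fun ω => S k ω ^ (-(ρ k))) μ)
    (b : Fin K → ℝ) (hb : ∀ k ∈ D1, b k = ∫ ω, S k ω ^ (-(ρ k)) ∂μ)
    (hindep : IndepFun (fun ω => fun k : {k : Fin K // k ∈ D1} => S k.1 ω)
      (fun ω k => W k ω) μ) :
    ∀ x : Fin K → ℝ, (∀ k, 0 ≤ x k) →
      ∫ ω, (⨆ k, x k * W k ω) ∂μ ≤
        (∫ ω, (⨆ k ∈ D1, x k * W k ω / (b k * S k ω ^ ρ k)) ∂μ) +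
          ∑ k ∈ D2, x k :=
  stmt_13_general μ K D1 D2 hcover W hWmeas hWint hWpos hWmean ρ S hSmeas hSpos hSint b hb hindep
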